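/- A generalized bitopological space (X, μ1, μ2) is pairwise T_{3/8} if and only if every countable subset of X is pairwise λ-closed. -/

import Mathlib

open Set

/-- A generalized topology on `X`: contains `∅` and is closed under arbitrary unions. -/
def IsGenTop {X : Type*} (μ : Set (Set X)) : Prop :=
  ∅ ∈ μ ∧ ∀ S ⊆ μ, ⋃₀ S ∈ μ

/-- `A` is μ-closed iff its complement is μ-open. -/
def gClosedSet {X : Type*} (μ : Set (Set X)) (A : Set X) : Prop := Aᶜ ∈ μ

/-- μ-closure: intersection of all μ-closed sets containing `A`. -/
def gCl {X : Type*} (μ : Set (Set X)) (A : Set X) : Set X :=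
  ⋂₀ {F | gClosedSet μ F ∧ A ⊆ F}

/-- `A^∧_μ`: intersection of all μ-open sets containing `A`. -/
def wedgeOp {X : Type*} (μ : Set (Set X)) (A : Set X) : Set X :=
  ⋂₀ {U | U ∈ μ ∧ A ⊆ U}

/-- `A^∨_μ`: union of all μ-closed sets contained in `A`. -/
def veeOp {X : Type*} (μ : Set (Set X)) (A : Set X) : Set X :=
  ⋃₀ {F | gClosedSet μ F ∧ F ⊆ A}

/-- `L` is a `∧_μ`-set. -/
def IsWedgeSet {X : Type*} (μ : Set (Set X)) (L : Set X) : Prop := L = wedgeOp μ L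

/-- `M` is a `∨_μ`-set. -/
def IsVeeSet {X : Type*} (μ : Set (Set X)) (M : Set X) : Prop := M = veeOp μ M

/-- `A` is `g_{μi}`-closed with respect to `μj`. -/
def GClosedWrt {X : Type*} (μi μj : Set (Set X)) (A : Set X) : Prop :=
  ∀ U ∈ μj, A ⊆ U → gCl μi A ⊆ U

/-- `A` is `g_{μi}`-open with respect to `μj`. -/
def GOpenWrt {X : Type*} (μi μj : Set (Set X)) (A : Set X) : Prop :=
  GClosedWrt μi μj Aᶜ

/-- `A` is `λ_{μi}`-closed with respect to `μj`. -/
def LamClosedWrt {X : Type*} (μi μj : Set (Set X)) (A : Set X) : Prop :=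
  ∃ F L : Set X, gClosedSet μi F ∧ IsWedgeSet μj L ∧ A = F ∩ L

/-- `A` is `λ_{μi}`-open with respect to `μj`. -/
def LamOpenWrt {X : Type*} (μi μj : Set (Set X)) (A : Set X) : Prop :=
  LamClosedWrt μi μj Aᶜ

/-- `A` is pairwise `λ`-closed. -/
def PairwiseLamClosed {X : Type*} (μ1 μ2 : Set (Set X)) (A : Set X) : Prop :=
  ∃ F1 F2 L1 L2 : Set X, gClosedSet μ1 F1 ∧ gClosedSet μ2 F2 ∧
    IsWedgeSet μ1 L1 ∧ IsWedgeSet μ2 L2 ∧ A = (F1 ∩ F2) ∩ (L1 ∩ L2)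

def PairwiseT0 {X : Type*} (μ1 μ2 : Set (Set X)) : Prop :=
  ∀ x y : X, x ≠ y →
    (∃ U ∈ μ1, x ∈ U ∧ y ∉ U) ∨ (∃ V ∈ μ2, y ∈ V ∧ x ∉ V)

def PairwiseT1 {X : Type*} (μ1 μ2 : Set (Set X)) : Prop :=
  ∀ x y : X, x ≠ y →
    (∃ U ∈ μ1, x ∈ U ∧ y ∉ U) ∧ (∃ V ∈ μ2, y ∈ V ∧ x ∉ V)

def PairwiseSymmetric {X : Type*} (μ1 μ2 : Set (Set X)) : Prop :=
  ∀ x y : X, (x ∈ gCl μ1 {y} → y ∈ gCl μ2 {x}) ∧ (x ∈ gCl μ2 {y} → y ∈ gCl μ1 {x})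

def PairwiseTHalf {X : Type*} (μ1 μ2 : Set (Set X)) : Prop :=
  (∀ A : Set X, GClosedWrt μ1 μ2 A → gClosedSet μ1 A) ∧
  (∀ A : Set X, GClosedWrt μ2 μ1 A → gClosedSet μ2 A)

def PairwiseR0 {X : Type*} (μ1 μ2 : Set (Set X)) : Prop :=
  (∀ G ∈ μ1, ∀ x ∈ G, gCl μ2 {x} ⊆ G) ∧ (∀ G ∈ μ2, ∀ x ∈ G, gCl μ1 {x} ⊆ G)

def PairwiseLamSymmetric {X : Type*} (μ1 μ2 : Set (Set X)) : Prop :=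
  ∀ A : Set X, PairwiseLamClosed μ1 μ2 A →
    LamClosedWrt μ1 μ2 A ∧ LamClosedWrt μ2 μ1 A

/-- `A` and `B` are μ-weakly separated. -/
def MuWeaklySeparated {X : Type*} (μ : Set (Set X)) (A B : Set X) : Prop :=
  ∃ U ∈ μ, ∃ V ∈ μ, A ⊆ U ∧ B ⊆ V ∧ A ∩ V = ∅ ∧ B ∩ U = ∅

def PairwiseTQuarter {X : Type*} (μ1 μ2 : Set (Set X)) : Prop :=
  ∀ P : Set X, P.Finite → ∀ y ∉ P,
    ∃ A : Set X, P ⊆ A ∧ y ∉ A ∧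
      (A ∈ μ1 ∨ A ∈ μ2 ∨ gClosedSet μ1 A ∨ gClosedSet μ2 A)

def PairwiseTThreeEighths {X : Type*} (μ1 μ2 : Set (Set X)) : Prop :=
  ∀ P : Set X, P.Countable → ∀ y ∉ P,
    ∃ A : Set X, P ⊆ A ∧ y ∉ A ∧
      (A ∈ μ1 ∨ A ∈ μ2 ∨ gClosedSet μ1 A ∨ gClosedSet μ2 A)

def PairwiseTFiveEighths {X : Type*} (μ1 μ2 : Set (Set X)) : Prop :=
  ∀ P : Set X, ∀ y ∉ P,
    ∃ A : Set X, P ⊆ A ∧ y ∉ A ∧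
      (A ∈ μ1 ∨ A ∈ μ2 ∨ gClosedSet μ1 A ∨ gClosedSet μ2 A)


/-!
A set `P` is pairwise λ-closed exactly when every point outside `P` is cut off from `P` by a
μ₁- or μ₂-open or closed superset of `P`. A point lies outside the μ-closure of `P`, resp. outside
`P^∧_μ`, precisely when some μ-closed, resp. μ-open, superset of `P` misses it; so the separation
property says that `P` is the intersection of its two closures and its two kernels. Conversely,
a point outside `F₁ ∩ F₂ ∩ L₁ ∩ L₂` misses a closed set `Fᵢ` or a kernel `Lᵢ`, and hence some open
superset of `Lᵢ`.
-/

section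

variable {X : Type*}

def IsOpenOrClosedIn (μ1 μ2 : Set (Set X)) (A : Set X) : Prop :=
  A ∈ μ1 ∨ A ∈ μ2 ∨ gClosedSet μ1 A ∨ gClosedSet μ2 A

section Operators

variable {μ : Set (Set X)} {A F L U : Set X}

theorem compl_gCl (μ : Set (Set X)) (A : Set X) :
    (gCl μ A)ᶜ = ⋃₀ {U | U ∈ μ ∧ A ⊆ Uᶜ} := by
  ext x
  simp only [gCl, gClosedSet, mem_compl_iff, mem_sInter, mem_sUnion, mem_ofPred_eq, not_forall]
  constructor
  · rintro ⟨F, ⟨hF, hAF⟩, hx⟩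
    exact ⟨Fᶜ, ⟨hF, by rwa [compl_compl]⟩, hx⟩
  · rintro ⟨U, ⟨hU, hAU⟩, hx⟩
    exact ⟨Uᶜ, ⟨by rwa [compl_compl], hAU⟩, by rwa [mem_compl_iff, not_not]⟩

theorem gClosedSet_gCl (hμ : ∀ S ⊆ μ, ⋃₀ S ∈ μ) (A : Set X) : gClosedSet μ (gCl μ A) := by
  rw [gClosedSet, compl_gCl]
  exact hμ _ fun _ hU => hU.1

theorem subset_gCl (μ : Set (Set X)) (A : Set X) : A ⊆ gCl μ A :=
  fun _ hx _ hF => hF.2 hx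

theorem gCl_subset (hF : gClosedSet μ F) (hAF : A ⊆ F) : gCl μ A ⊆ F :=
  fun _ hx => hx F ⟨hF, hAF⟩

theorem subset_wedgeOp (μ : Set (Set X)) (A : Set X) : A ⊆ wedgeOp μ A :=
  fun _ hx _ hU => hU.2 hx

theorem wedgeOp_subset (hU : U ∈ μ) (hAU : A ⊆ U) : wedgeOp μ A ⊆ U :=
  fun _ hx => hx U ⟨hU, hAU⟩

theorem isWedgeSet_wedgeOp (μ : Set (Set X)) (A : Set X) : IsWedgeSet μ (wedgeOp μ A) :=
  (subset_wedgeOp μ _).antisymm fun _ hx U hU =>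
    hx U ⟨hU.1, wedgeOp_subset hU.1 hU.2⟩

theorem IsWedgeSet.exists_mem_notMem (hL : IsWedgeSet μ L) {y : X} (hy : y ∉ L) :
    ∃ U ∈ μ, L ⊆ U ∧ y ∉ U := by
  rw [hL, wedgeOp, mem_sInter] at hy
  obtain ⟨U, ⟨hU, hLU⟩, hyU⟩ := not_forall₂.mp hy
  exact ⟨U, hU, hLU, hyU⟩

end Operators

section Separation

variable {μ1 μ2 : Set (Set X)} {P : Set X}

theorem PairwiseLamClosed.exists_separating (hP : PairwiseLamClosed μ1 μ2 P) {y : X}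
    (hy : y ∉ P) : ∃ A, P ⊆ A ∧ y ∉ A ∧ IsOpenOrClosedIn μ1 μ2 A := by
  obtain ⟨F1, F2, L1, L2, hF1, hF2, hL1, hL2, rfl⟩ := hP
  simp only [mem_inter_iff, not_and_or] at hy
  rcases hy with (hy | hy) | (hy | hy)
  · exact ⟨F1, fun _ hx => hx.1.1, hy, .inr <| .inr <| .inl hF1⟩
  · exact ⟨F2, fun _ hx => hx.1.2, hy, .inr <| .inr <| .inr hF2⟩
  · obtain ⟨U, hU, hLU, hyU⟩ := hL1.exists_mem_notMem hy
    exact ⟨U, fun _ hx => hLU hx.2.1, hyU, .inl hU⟩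
  · obtain ⟨U, hU, hLU, hyU⟩ := hL2.exists_mem_notMem hy
    exact ⟨U, fun _ hx => hLU hx.2.2, hyU, .inr <| .inl hU⟩

theorem pairwiseLamClosed_of_forall_exists_separating
    (h1 : ∀ S ⊆ μ1, ⋃₀ S ∈ μ1) (h2 : ∀ S ⊆ μ2, ⋃₀ S ∈ μ2)
    (hsep : ∀ y ∉ P, ∃ A, P ⊆ A ∧ y ∉ A ∧ IsOpenOrClosedIn μ1 μ2 A) :
    PairwiseLamClosed μ1 μ2 P := by
  refine ⟨gCl μ1 P, gCl μ2 P, wedgeOp μ1 P, wedgeOp μ2 P, gClosedSet_gCl h1 P,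
    gClosedSet_gCl h2 P, isWedgeSet_wedgeOp μ1 P, isWedgeSet_wedgeOp μ2 P, ?_⟩
  refine (subset_inter (subset_inter (subset_gCl _ _) (subset_gCl _ _))
    (subset_inter (subset_wedgeOp _ _) (subset_wedgeOp _ _))).antisymm fun y hy => ?_
  by_contra hyP
  obtain ⟨A, hPA, hyA, hA⟩ := hsep y hyP
  refine hyA ?_
  rcases hA with hA | hA | hA | hA
  · exact wedgeOp_subset hA hPA hy.2.1
  · exact wedgeOp_subset hA hPA hy.2.2
  · exact gCl_subset hA hPA hy.1.1
  · exact gCl_subset hA hPA hy.1.2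

theorem pairwiseLamClosed_iff_forall_exists_separating
    (h1 : ∀ S ⊆ μ1, ⋃₀ S ∈ μ1) (h2 : ∀ S ⊆ μ2, ⋃₀ S ∈ μ2) :
    PairwiseLamClosed μ1 μ2 P ↔ ∀ y ∉ P, ∃ A, P ⊆ A ∧ y ∉ A ∧ IsOpenOrClosedIn μ1 μ2 A :=
  ⟨fun hP _ => hP.exists_separating, pairwiseLamClosed_of_forall_exists_separating h1 h2⟩

end Separation

end

theorem stmt17 {X : Type*} (μ1 μ2 : Set (Set X))
    (h1 : IsGenTop μ1) (h2 : IsGenTop μ2) :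
    PairwiseTThreeEighths μ1 μ2 ↔
      ∀ P : Set X, P.Countable → PairwiseLamClosed μ1 μ2 P :=
  forall_congr' fun _ => imp_congr_right fun _ =>
    (pairwiseLamClosed_iff_forall_exists_separating h1.2 h2.2).symm
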